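/- Let D be a digraph and x a non-terminating chip-distribution on D such that in some legal game from x every vertex eventually fires. Then |x| ≥ minfas(D). -/

import Mathlib

/- Common definitions for chip-firing on multigraphs/digraphs.

A digraph (without a fixed vertex enumeration) on a finite vertex type `V`
is given by its arc-multiplicity function `a : V → V → ℕ` (`a u v` = number
of arcs from `u` to `v`).  An undirected multigraph is the special case of a
symmetric multiplicity function `d` (`d u v` = number of edges between `u`
and `v`); then `outDeg d v = ∑ u, d v u` is the degree of `v`, and
`∑ v, ∑ u, d v u = 2 |E|`. -/

variable {V : Type*} [Fintype V] [DecidableEq V]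

/-- Outdegree of `v` (= degree in the undirected, i.e. symmetric, case). -/
def outDeg (a : V → V → ℕ) (v : V) : ℕ := ∑ u, a v u

/-- Indegree of `v`. -/
def inDeg (a : V → V → ℕ) (v : V) : ℕ := ∑ u, a u v

/-- The distribution obtained from `x` by firing the vertex `v`:
`v` loses `outDeg a v` chips and each `u` receives `a v u` chips. -/
def fire (a : V → V → ℕ) (x : V → ℕ) (v : V) : V → ℕ :=
  fun u => x u + a v u - (if u = v then outDeg a v else 0)

/-- The distribution obtained from `x` after firing the vertices in the list
`l`, in order. -/
def run (a : V → V → ℕ) (x : V → ℕ) : List V → (V → ℕ)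
  | [] => x
  | v :: l => run a (fire a x v) l

/-- The sequence of firings `l` starting from the distribution `x` is a legal
game: each fired vertex is active (has at least `outDeg` many chips) when it
is fired. -/
def LegalGame (a : V → V → ℕ) : (V → ℕ) → List V → Prop
  | _, [] => True
  | x, v :: l => outDeg a v ≤ x v ∧ LegalGame a (fire a x v) l

/-- `x` is non-terminating: after any legal game from `x` there is still an
active vertex, so every legal game can be continued indefinitely. -/
def Nonterminating (a : V → V → ℕ) (x : V → ℕ) : Prop :=
  ∀ l : List V, LegalGame a x l → ∃ v, outDeg a v ≤ run a x l v

/-- `x` is terminating: some legal game from `x` reaches a distribution with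
no active vertex. -/
def Terminates (a : V → V → ℕ) (x : V → ℕ) : Prop :=
  ∃ l : List V, LegalGame a x l ∧ ∀ v, run a x l v < outDeg a v

/-- No loops. -/
def Loopless (a : V → V → ℕ) : Prop := ∀ v, a v v = 0

/-- Connectivity of an undirected multigraph `d`. -/
def UConnected (d : V → V → ℕ) : Prop :=
  ∀ u v : V, Relation.ReflTransGen (fun p q => 0 < d p q) u v

/-- Weak connectivity of a digraph `a`. -/
def WConnected (a : V → V → ℕ) : Prop :=
  ∀ u v : V, Relation.ReflTransGen (fun p q => 0 < a p q ∨ 0 < a q p) u v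

/-- A digraph is acyclic if it has no directed cycle. -/
def AcyclicDigraph (a : V → V → ℕ) : Prop :=
  ∀ v : V, ¬ Relation.TransGen (fun p q => 0 < a p q) v v

/-- `a` is an orientation of the undirected multigraph `d`. -/
def IsOrientation (d a : V → V → ℕ) : Prop := ∀ u v, a u v + a v u = d u v

/-- A digraph is Eulerian if `d⁺(v) = d⁻(v)` for every vertex. -/
def EulerianD (a : V → V → ℕ) : Prop := ∀ v, outDeg a v = inDeg a v

/-- `f` is a feedback arc set of the digraph `a`: a subset of the arcs whose
removal leaves an acyclic digraph. -/
def IsFAS (a f : V → V → ℕ) : Prop :=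
  (∀ u v, f u v ≤ a u v) ∧ AcyclicDigraph (fun u v => a u v - f u v)

/-- Number of arcs in an arc set. -/
def arcSize (f : V → V → ℕ) : ℕ := ∑ u, ∑ v, f u v

/-- Degree of a divisor. -/
def divDeg (f : V → ℤ) : ℤ := ∑ v, f v

/-- Effective divisor. -/
def Effective (f : V → ℤ) : Prop := ∀ v, 0 ≤ f v

/-- Linear equivalence of divisors on the multigraph `d`: they differ by an
integer combination of the columns of the Laplacian. -/
def LinEquiv (d : V → V → ℕ) (f g : V → ℤ) : Prop :=
  ∃ z : V → ℤ, ∀ v, g v = f v + ∑ u, (d v u : ℤ) * (z u - z v)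

/-- `r` is the Baker–Norine rank of the divisor `f` on the multigraph `d`. -/
def IsRank (d : V → V → ℕ) (f : V → ℤ) (r : ℤ) : Prop :=
  IsLeast {m : ℤ | ∃ g : V → ℤ, Effective g ∧
    (¬ ∃ h : V → ℤ, Effective h ∧ LinEquiv d (fun v => f v - g v) h) ∧
    m = divDeg g - 1} r
/-! Order the vertices by the time of their last firing in a legal game in which every vertex
fires. The arcs `u → v` along which `u` fires last no earlier than `v` (loops included) form a
feedback arc set `F`, as all other arcs point strictly forward in this order. Each vertex still
holds every chip sent to it along an arc of `F`, since these arrived at or after its last firing;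
firing preserves the number of chips, so `|F| ≤ |x|`. -/

theorem AcyclicDigraph.of_lt_of_pos {V : Type*} (b : V → V → ℕ) (r : V → ℕ)
    (hr : ∀ p q, 0 < b p q → r q < r p) : AcyclicDigraph b := by
  have hlt : ∀ p q, Relation.TransGen (fun p q => 0 < b p q) p q → r q < r p := by
    intro p q h
    induction h with
    | single h => exact hr _ _ h
    | tail _ h ih => exact (hr _ _ h).trans ih
  exact fun v hv => lt_irrefl _ (hlt v v hv)

section BackwardArcs

variable {V : Type*} [DecidableEq V] (a : V → V → ℕ)

theorem idxOf_reverse_append_singleton (l : List V) (u v : V) :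
    (l ++ [v]).reverse.idxOf u = if u = v then 0 else l.reverse.idxOf u + 1 := by
  by_cases h : u = v <;> simp [h, eq_comm]

/-- `l.reverse.idxOf u` is the number of firings after the last firing of `u` in `l`. -/
def backwardArcs (l : List V) (u v : V) : ℕ :=
  if u ∈ l ∧ l.reverse.idxOf u ≤ l.reverse.idxOf v then a u v else 0

theorem backwardArcs_le (l : List V) (u v : V) : backwardArcs a l u v ≤ a u v := by
  unfold backwardArcs; split_ifs <;> omega

theorem backwardArcs_nil (u v : V) : backwardArcs a [] u v = 0 := by
  simp [backwardArcs]

theorem backwardArcs_append_singleton_self (l : List V) (u v : V) :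
    backwardArcs a (l ++ [v]) u v = if u = v then a v v else 0 := by
  rw [backwardArcs, idxOf_reverse_append_singleton, idxOf_reverse_append_singleton]
  by_cases h : u = v <;> simp [h]

theorem backwardArcs_append_singleton_le (l : List V) (u : V) {v w : V} (hw : w ≠ v) :
    backwardArcs a (l ++ [v]) u w ≤ backwardArcs a l u w + if u = v then a v w else 0 := by
  by_cases h : u = v
  · subst h
    simpa using (backwardArcs_le a (l ++ [u]) u w).trans (Nat.le_add_left _ (backwardArcs a l u w))
  · rw [backwardArcs, backwardArcs, idxOf_reverse_append_singleton, idxOf_reverse_append_singleton]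
    simp [h, hw]

theorem isFAS_backwardArcs {l : List V} (hall : ∀ v, v ∈ l) : IsFAS a (backwardArcs a l) := by
  refine ⟨backwardArcs_le a l, AcyclicDigraph.of_lt_of_pos _ (fun v => l.reverse.idxOf v) ?_⟩
  intro p q hpq
  unfold backwardArcs at hpq
  split_ifs at hpq with h <;> simp_all

end BackwardArcs

section ChipFiring

variable (a : V → V → ℕ)

theorem fire_apply_of_ne (x : V → ℕ) {v u : V} (h : u ≠ v) : fire a x v u = x u + a v u := by
  simp [fire, h]

theorem fire_apply_self (x : V → ℕ) (v : V) : fire a x v v = x v + a v v - outDeg a v := by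
  simp [fire]

theorem sum_fire {x : V → ℕ} {v : V} (hv : outDeg a v ≤ x v) :
    ∑ u, fire a x v u = ∑ u, x u := by
  have hle : ∀ u ∈ Finset.univ, (if u = v then outDeg a v else 0) ≤ x u + a v u := by
    intro u _
    split_ifs with h
    · subst h; omega
    · exact Nat.zero_le _
  unfold fire
  rw [Finset.sum_tsub_distrib _ hle, Finset.sum_add_distrib, Finset.sum_ite_eq',
    if_pos (Finset.mem_univ v), outDeg, Nat.add_sub_cancel]

theorem run_append_singleton (x : V → ℕ) (l : List V) (v : V) :
    run a x (l ++ [v]) = fire a (run a x l) v := by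
  induction l generalizing x <;> simp_all [run]

theorem legalGame_append_singleton {x : V → ℕ} {l : List V} {v : V} :
    LegalGame a x (l ++ [v]) ↔ LegalGame a x l ∧ outDeg a v ≤ run a x l v := by
  induction l generalizing x <;> simp_all [LegalGame, run, and_assoc]

theorem sum_run {x : V → ℕ} {l : List V} (hl : LegalGame a x l) :
    ∑ v, run a x l v = ∑ v, x v := by
  induction l generalizing x with
  | nil => rfl
  | cons v l ih => exact (ih hl.2).trans (sum_fire a hl.1)

theorem sum_backwardArcs_le_run {x : V → ℕ} {l : List V} (hl : LegalGame a x l) (w : V) :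
    ∑ u, backwardArcs a l u w ≤ run a x l w := by
  induction l using List.reverseRecOn generalizing w with
  | nil => simp [backwardArcs_nil]
  | append_singleton l v ih =>
    obtain ⟨hl, hv⟩ := (legalGame_append_singleton a).1 hl
    rw [run_append_singleton]
    by_cases hw : w = v
    · subst hw
      simp only [backwardArcs_append_singleton_self, Finset.sum_ite_eq', Finset.mem_univ, if_true,
        fire_apply_self]
      omega
    · calc ∑ u, backwardArcs a (l ++ [v]) u w
          ≤ ∑ u, (backwardArcs a l u w + if u = v then a v w else 0) :=
            Finset.sum_le_sum fun u _ => backwardArcs_append_singleton_le a l u hw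
        _ = ∑ u, backwardArcs a l u w + a v w := by simp [Finset.sum_add_distrib]
        _ ≤ run a x l w + a v w := Nat.add_le_add_right (ih hl w) _
        _ = fire a (run a x l) v w := (fire_apply_of_ne a _ hw).symm

theorem arcSize_backwardArcs_le {x : V → ℕ} {l : List V} (hl : LegalGame a x l) :
    arcSize (backwardArcs a l) ≤ ∑ v, x v :=
  calc arcSize (backwardArcs a l) = ∑ v, ∑ u, backwardArcs a l u v := Finset.sum_comm
    _ ≤ ∑ v, run a x l v := Finset.sum_le_sum fun v _ => sum_backwardArcs_le_run a hl v
    _ = ∑ v, x v := sum_run a hl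

end ChipFiring

theorem stmt9_general {V : Type*} [Fintype V] [DecidableEq V]
    (a : V → V → ℕ)
    (x : V → ℕ)
    (l : List V) (hl : LegalGame a x l) (hall : ∀ v : V, v ∈ l)
    (m : ℕ) (hm : IsLeast {n : ℕ | ∃ f : V → V → ℕ, IsFAS a f ∧ arcSize f = n} m) :
    m ≤ ∑ v, x v :=
  (hm.2 ⟨_, isFAS_backwardArcs a hall, rfl⟩).trans (arcSize_backwardArcs_le a hl)

/-- if `x` is non-terminating on a digraph and in some legal game
from `x` every vertex eventually fires, then `|x| ≥ minfas(D)`. -/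
theorem stmt9 {V : Type*} [Fintype V] [DecidableEq V]
    (a : V → V → ℕ) (hloop : Loopless a) (hconn : WConnected a)
    (x : V → ℕ) (hx : Nonterminating a x)
    (l : List V) (hl : LegalGame a x l) (hall : ∀ v : V, v ∈ l)
    (m : ℕ) (hm : IsLeast {n : ℕ | ∃ f : V → V → ℕ, IsFAS a f ∧ arcSize f = n} m) :
    m ≤ ∑ v, x v :=
  stmt9_general a x l hl hall m hm
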